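/- arXiv:math/9810035 — 2 statements merged into one kernel-verified Lean document; each statement's English description precedes it below -/
import Mathlib

section
/- Let μ ≥ 0 and a ≥ 0 be real numbers, s a real number, and l a real number. Then (1 + |μ − l|)^s · (1 + μ + |l|)^a ≤ (1 + μ)^{s+a} · (1 + |l|)^{|s| + a}. -/
theorem weight_estimate (μ a s l : ℝ) (hμ : 0 ≤ μ) (ha : 0 ≤ a) :
    (1 + |μ - l|) ^ s * (1 + μ + |l|) ^ a ≤ (1 + μ) ^ (s + a) * (1 + |l|) ^ (|s| + a) := by
  set A := 1 + |μ - l| with hA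
  set B := 1 + μ with hB
  set C := 1 + |l| with hC
  have hApos : 0 < A := by positivity
  have hBpos : 0 < B := by positivity
  have hCpos : 0 < C := by positivity
  have hABC : A ≤ B * C := by
    have h1 : |μ - l| ≤ μ + |l| := by
      calc |μ - l| ≤ |μ| + |l| := abs_sub _ _
        _ = μ + |l| := by rw [abs_of_nonneg hμ]
    nlinarith [abs_nonneg l, abs_nonneg (μ - l)]
  have hBAC : B ≤ A * C := by
    have h1 : μ ≤ |μ - l| + |l| := by
      calc μ = |μ| := (abs_of_nonneg hμ).symm
        _ = |(μ - l) + l| := by ring_nf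
        _ ≤ |μ - l| + |l| := abs_add_le _ _
    nlinarith [abs_nonneg l, abs_nonneg (μ - l)]
  have key1 : A ^ s ≤ B ^ s * C ^ |s| := by
    rcases le_or_gt 0 s with hs | hs
    · rw [abs_of_nonneg hs, ← Real.mul_rpow hBpos.le hCpos.le]
      exact Real.rpow_le_rpow hApos.le hABC hs
    · rw [abs_of_neg hs]
      have h2 : (A * C) ^ s ≤ B ^ s :=
        Real.rpow_le_rpow_of_nonpos hBpos hBAC hs.le
      rw [Real.mul_rpow hApos.le hCpos.le] at h2
      have hCs : 0 < C ^ s := Real.rpow_pos_of_pos hCpos s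
      have : A ^ s ≤ B ^ s / C ^ s := by
        rw [le_div_iff₀ hCs]; exact h2
      calc A ^ s ≤ B ^ s / C ^ s := this
        _ = B ^ s * C ^ (-s) := by
          rw [Real.rpow_neg hCpos.le, div_eq_mul_inv]
  have key2 : (1 + μ + |l|) ^ a ≤ B ^ a * C ^ a := by
    rw [← Real.mul_rpow hBpos.le hCpos.le]
    apply Real.rpow_le_rpow (by positivity) _ ha
    nlinarith [abs_nonneg l]
  calc A ^ s * (1 + μ + |l|) ^ a ≤ (B ^ s * C ^ |s|) * (B ^ a * C ^ a) := by
        apply mul_le_mul key1 key2 (by positivity) (by positivity)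
    _ = (B ^ s * B ^ a) * (C ^ |s| * C ^ a) := by ring
    _ = B ^ (s + a) * C ^ (|s| + a) := by
        rw [← Real.rpow_add hBpos, ← Real.rpow_add hCpos]
end

section
/- Let S be a set, G a finite group acting freely on S, and N : S × S × S → ℕ (written N_{ij}^k) structure constants such that: (a) for each i, j, the set {k : N_{ij}^k ≠ 0} is finite; (b) N_{σ(i) j}^{σ(k)} = N_{ij}^k and N_{i σ(j)}^{σ(k)} = N_{ij}^k for all σ ∈ G; (c) associativity holds: Σ_m N_{ij}^m N_{mk}^l = Σ_m N_{jk}^m N_{im}^l for all i,j,k,l. Then the orbit structure constants C_{[i][j]}^{[k]} := Σ_{σ ∈ G} N_{ij}^{σ(k)} are well defined (independent of the choice of representatives i, j, k of the orbits), and they satisfy the associativity relation Σ_{[m]} C_{[i][j]}^{[m]} C_{[m][k]}^{[l]} = Σ_{[m]} C_{[j][k]}^{[m]} C_{[i][m]}^{[l]}. -/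
/-!
Because the action is free, `(q, σ) ↦ σ • q.out` identifies `S/G × G` with `S`, so a finitely
supported sum over `S` splits into a sum over orbits of sums over `G`. Equivariance makes the
orbit constant `C_{[i][j]}^{[k]} = orbitSum G (N i j) k = ∑ σ, N i j (σ • k)` invariant under
moving `i`, `j` or `k` within its orbit. Unfolding the orbit sum over `[m]` then turns each side of
the orbit associativity relation into `∑ τ` of the corresponding side of the associativity of `N`
at `(i, j, k, τ • l)`.
-/

open MulAction

namespace MulAction

variable {G S M : Type*} [Group G] [MulAction G S]

theorem bijective_smul_out_of_free (hfree : ∀ (σ : G) (s : S), σ • s = s → σ = 1) :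
    Function.Bijective fun p : Quotient (orbitRel G S) × G => p.2 • p.1.out := by
  constructor
  · rintro ⟨q, σ⟩ ⟨p, τ⟩ h
    dsimp only at h
    obtain rfl : q = p := by
      rw [← q.out_eq, ← p.out_eq, Quotient.eq, orbitRel_apply]
      exact ⟨σ⁻¹ * τ, by simp only [mul_smul, ← h, inv_smul_smul]⟩
    obtain rfl : σ = τ := by
      rw [← inv_mul_eq_one]
      exact hfree _ _ (by rw [mul_smul, ← h, inv_smul_smul])
    rfl
  · intro m
    obtain ⟨σ, hσ⟩ := Quotient.mk_out (s := orbitRel G S) m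
    exact ⟨(⟦m⟧, σ⁻¹), by simp only [← hσ, inv_smul_smul]⟩

variable (G) [Fintype G]

def orbitSum [AddCommMonoid M] (f : S → M) (x : S) : M := ∑ σ : G, f (σ • x)

variable {G}

section AddCommMonoid

variable [AddCommMonoid M]

theorem orbitSum_smul (f : S → M) (τ : G) (x : S) :
    orbitSum G f (τ • x) = orbitSum G f x := by
  simp only [orbitSum, ← mul_smul]
  exact Equiv.sum_comp (Equiv.mulRight τ) fun σ => f (σ • x)

theorem orbitSum_comp_smul (f : S → M) (τ : G) (x : S) :
    orbitSum G (fun y => f (τ • y)) x = orbitSum G f x := by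
  simp only [orbitSum, ← mul_smul]
  exact Equiv.sum_comp (Equiv.mulLeft τ) fun σ => f (σ • x)

theorem orbitSum_apply_smul_of_smul_invariant {f : S → S → M}
    (hf : ∀ (τ : G) (a y : S), f (τ • a) (τ • y) = f a y) (τ : G) (a x : S) :
    orbitSum G (f (τ • a)) x = orbitSum G (f a) x := by
  have hshift : f (τ • a) = fun y => f a (τ⁻¹ • y) := by
    funext y
    rw [← hf τ a, smul_inv_smul]
  rw [hshift, orbitSum_comp_smul]

theorem orbitSum_structure_smul {N : S → S → S → M}
    (hequiv₁ : ∀ (σ : G) (i j k : S), N (σ • i) j (σ • k) = N i j k)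
    (hequiv₂ : ∀ (σ : G) (i j k : S), N i (σ • j) (σ • k) = N i j k)
    (σ₁ σ₂ σ₃ : G) (i j k : S) :
    orbitSum G (N (σ₁ • i) (σ₂ • j)) (σ₃ • k) = orbitSum G (N i j) k := by
  rw [orbitSum_smul,
    orbitSum_apply_smul_of_smul_invariant (f := fun a => N a (σ₂ • j)) (hequiv₁ · · _ ·),
    orbitSum_apply_smul_of_smul_invariant (hequiv₂ · i)]

theorem finsum_eq_finsum_orbitSum (hfree : ∀ (σ : G) (s : S), σ • s = s → σ = 1)
    {f : S → M} (hf : f.HasFiniteSupport) :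
    ∑ᶠ m, f m = ∑ᶠ q : Quotient (orbitRel G S), orbitSum G f q.out := by
  let e := Equiv.ofBijective _ (bijective_smul_out_of_free hfree)
  rw [← finsum_comp_equiv e, finsum_curry _ (hf.fun_comp_of_injective e.injective)]
  simp only [finsum_eq_sum_of_fintype]
  rfl

end AddCommMonoid

theorem finsum_orbitSum_mul_orbitSum [NonUnitalNonAssocSemiring M]
    (hfree : ∀ (σ : G) (s : S), σ • s = s → σ = 1)
    {a : S → M} (ha : a.HasFiniteSupport) {b : S → S → M} {l : S}
    (hb : ∀ (σ : G) (m : S), orbitSum G (b (σ • m)) l = orbitSum G (b m) l) :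
    ∑ᶠ q : Quotient (orbitRel G S), orbitSum G a q.out * orbitSum G (b q.out) l =
      ∑ τ : G, ∑ᶠ m, a m * b m (τ • l) := by
  calc _ = ∑ᶠ q : Quotient (orbitRel G S),
        orbitSum G (fun m => a m * orbitSum G (b m) l) q.out := by
        refine finsum_congr fun q => ?_
        rw [orbitSum, Finset.sum_mul]
        exact Finset.sum_congr rfl fun σ _ => congrArg _ (hb σ q.out).symm
    _ = ∑ᶠ m, a m * orbitSum G (b m) l :=
        (finsum_eq_finsum_orbitSum hfree (ha.mul_left _)).symm
    _ = ∑ τ : G, ∑ᶠ m, a m * b m (τ • l) := by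
        simp only [orbitSum, Finset.mul_sum]
        exact finsum_sum_comm _ _ fun τ _ => ha.mul_left _

end MulAction

theorem orbit_structure_constants {S : Type*} {G : Type*} [Group G] [Fintype G]
    [MulAction G S]
    (hfree : ∀ (σ : G) (s : S), σ • s = s → σ = 1)
    (N : S → S → S → ℕ)
    (hfin : ∀ i j : S, {k : S | N i j k ≠ 0}.Finite)
    (hequiv₁ : ∀ (σ : G) (i j k : S), N (σ • i) j (σ • k) = N i j k)
    (hequiv₂ : ∀ (σ : G) (i j k : S), N i (σ • j) (σ • k) = N i j k)
    (hassoc : ∀ i j k l : S,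
      (∑ᶠ m : S, N i j m * N m k l) = ∑ᶠ m : S, N j k m * N i m l) :
    (∀ (σ₁ σ₂ σ₃ : G) (i j k : S),
        (∑ σ : G, N (σ₁ • i) (σ₂ • j) (σ • (σ₃ • k))) = ∑ σ : G, N i j (σ • k)) ∧
    (∀ i j k l : S,
        (∑ᶠ q : Quotient (orbitRel G S),
            (∑ σ : G, N i j (σ • q.out)) * ∑ σ : G, N q.out k (σ • l)) =
          ∑ᶠ q : Quotient (orbitRel G S),
            (∑ σ : G, N j k (σ • q.out)) * ∑ σ : G, N i q.out (σ • l)) := by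
  have hwd := orbitSum_structure_smul hequiv₁ hequiv₂
  refine ⟨hwd, fun i j k l => ?_⟩
  calc _ = ∑ τ : G, ∑ᶠ m, N i j m * N m k (τ • l) :=
        finsum_orbitSum_mul_orbitSum hfree (hfin i j) fun σ m => by
          simpa using hwd σ 1 1 m k l
    _ = ∑ τ : G, ∑ᶠ m, N j k m * N i m (τ • l) :=
        Finset.sum_congr rfl fun τ _ => hassoc i j k (τ • l)
    _ = _ := (finsum_orbitSum_mul_orbitSum hfree (hfin j k) fun σ m => by
        simpa using hwd 1 σ 1 i m l).symm
end
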